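/- arXiv:1809.06023 — 2 statements merged into one kernel-verified Lean document; each statement's English description precedes it below -/
import Mathlib

section
/- Let R > 0 and 0 < ε < R. Let A be a real random variable uniformly distributed on [−R, R], let Z be a random variable with values in a measurable space, and let Â = g(Z) for a measurable function g. Define the mutual information I(A; Z) := D(ℙ_{(A,Z)} ‖ ℙ_A ⊗ ℙ_Z) / log 2 (i.e., the Kullback–Leibler divergence between the joint law of (A, Z) and the product of the marginal laws, measured in bits). Then ℙ( |Â − A| < ε ) ≤ ( I(A; Z) + 1 ) / log₂(R/ε). -/
/-!
Fano's inequality in its continuous form. Let `μ` be the joint law of `(A, Z)`, `ν` the product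
of the marginals, and `E = {|g(Z) - A| < ε}`. Whatever `z` is, the slice of `E` is an interval
of length `2ε`, so `ν(E) ≤ ε / R` because `A` is uniform on `[-R, R]`. The log-sum inequality on
`E` and on `Eᶜ` bounds `D(μ ‖ ν)` below by the binary divergence between `μ(E)` and `ν(E)`, which
is at least `μ(E) log (R / ε)` minus the binary entropy of `μ(E)`, and that entropy is at most
`log 2`.
-/

open MeasureTheory ProbabilityTheory Finset

open scoped Classical in
/-- The Kullback–Leibler divergence `D(μ ‖ ν)` (in nats, valued in `ℝ≥0∞`):
the integral of the log-likelihood ratio if `μ ≪ ν` and the ratio is integrable,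
and `∞` otherwise. -/
noncomputable def klDivergence {α : Type*} [MeasurableSpace α] (μ ν : Measure α) : ENNReal :=
  if μ ≪ ν ∧ Integrable (llr μ ν) μ then ENNReal.ofReal (∫ x, llr μ ν x ∂μ) else ⊤

open InformationTheory Real

section LogSum

variable {α : Type*} [MeasurableSpace α] {μ ν : Measure α} {s : Set α}

lemma rnDeriv_restrict_restrict [SigmaFinite ν] [μ.HaveLebesgueDecomposition ν]
    (hμν : μ ≪ ν) (hs : MeasurableSet s) :
    (μ.restrict s).rnDeriv (ν.restrict s) =ᵐ[ν.restrict s] μ.rnDeriv ν := by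
  have hμs : μ.restrict s = (ν.restrict s).withDensity (μ.rnDeriv ν) := by
    rw [← restrict_withDensity hs, Measure.withDensity_rnDeriv_eq μ ν hμν]
  rw [hμs]
  exact Measure.rnDeriv_withDensity _ (Measure.measurable_rnDeriv μ ν)

lemma llr_restrict_restrict [SigmaFinite ν] [μ.HaveLebesgueDecomposition ν]
    (hμν : μ ≪ ν) (hs : MeasurableSet s) :
    llr (μ.restrict s) (ν.restrict s) =ᵐ[μ.restrict s] llr μ ν := by
  filter_upwards [(hμν.restrict s).ae_le (rnDeriv_restrict_restrict hμν hs)] with x hx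
  simp only [llr_def, hx]

/-- The log-sum inequality on a measurable set. -/
lemma mul_log_le_setIntegral_llr [IsFiniteMeasure μ] [IsFiniteMeasure ν]
    (hμν : μ ≪ ν) (h_int : Integrable (llr μ ν) μ) (hs : MeasurableSet s) :
    μ.real s * log (μ.real s / ν.real s) ≤ ∫ x in s, llr μ ν x ∂μ := by
  have hllr := llr_restrict_restrict hμν hs
  have h_int_s : Integrable (llr (μ.restrict s) (ν.restrict s)) (μ.restrict s) :=
    (integrable_congr hllr).mpr h_int.restrict
  have h := mul_log_le_toReal_klDiv (hμν.restrict s) h_int_s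
  rw [toReal_klDiv (hμν.restrict s) h_int_s, integral_congr_ae hllr] at h
  simp only [measureReal_restrict_apply_univ] at h
  linarith

end LogSum

lemma mul_log_add_mul_log_inv_le_mul_log_div {p q c : ℝ} (hp : 0 ≤ p) (hpq : 0 < p → 0 < q)
    (hqc : q ≤ c) : p * log p + p * log c⁻¹ ≤ p * log (p / q) := by
  rcases hp.eq_or_lt with rfl | hp
  · simp
  have hq := hpq hp
  rw [← mul_add, ← log_mul hp.ne' (inv_ne_zero (hq.trans_le hqc).ne'), div_eq_mul_inv]
  have := hq.trans_le hqc
  gcongr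

section Fano

variable {α : Type*} [MeasurableSpace α] {μ ν : Measure α}
  [IsProbabilityMeasure μ] [IsProbabilityMeasure ν]

/-- Fano's inequality. -/
theorem measureReal_mul_log_inv_le_integral_llr_add_log_two (hμν : μ ≪ ν)
    (h_int : Integrable (llr μ ν) μ) {s : Set α} (hs : MeasurableSet s) {c : ℝ}
    (hνs : ν.real s ≤ c) : μ.real s * log c⁻¹ ≤ ∫ x, llr μ ν x ∂μ + log 2 := by
  have hpos (t : Set α) (ht : 0 < μ.real t) : 0 < ν.real t :=
    measureReal_nonneg.lt_of_ne'
      ((measureReal_ne_zero_iff).mpr fun h => (measureReal_ne_zero_iff).mp ht.ne' (hμν h))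
  have hs_le := (mul_log_add_mul_log_inv_le_mul_log_div measureReal_nonneg (hpos s) hνs).trans
    (mul_log_le_setIntegral_llr hμν h_int hs)
  have hsc_le := (mul_log_add_mul_log_inv_le_mul_log_div measureReal_nonneg (hpos sᶜ)
    measureReal_le_one).trans (mul_log_le_setIntegral_llr hμν h_int hs.compl)
  have hent : -log 2 ≤ μ.real s * log (μ.real s) + (1 - μ.real s) * log (1 - μ.real s) := by
    have := binEntropy_le_log_two (p := μ.real s)
    rw [binEntropy, log_inv, log_inv] at this
    linarith
  rw [inv_one, log_one, mul_zero, add_zero, probReal_compl_eq_one_sub hs] at hsc_le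
  linarith [integral_add_compl hs h_int]

end Fano

lemma measure_prod_le_of_forall_slice_le {β γ : Type*} [MeasurableSpace β] [MeasurableSpace γ]
    {μ : Measure β} {ν : Measure γ} [SFinite μ] [IsProbabilityMeasure ν]
    {s : Set (β × γ)} (hs : MeasurableSet s) {c : ENNReal}
    (hc : ∀ y, μ ((fun x => (x, y)) ⁻¹' s) ≤ c) : μ.prod ν s ≤ c := by
  rw [Measure.prod_apply_symm hs]
  calc ∫⁻ y, μ ((fun x => (x, y)) ⁻¹' s) ∂ν ≤ ∫⁻ _, c ∂ν := lintegral_mono hc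
    _ = c := by simp

lemma inv_smul_restrict_Icc_ball_le {R : ℝ} (hR : 0 < R) (x ε : ℝ) :
    ((ENNReal.ofReal (2 * R))⁻¹ • volume.restrict (Set.Icc (-R) R)) (Metric.ball x ε)
      ≤ ENNReal.ofReal (ε / R) := by
  rw [Measure.smul_apply, smul_eq_mul, mul_comm, ← div_eq_mul_inv]
  calc volume.restrict (Set.Icc (-R) R) (Metric.ball x ε) / ENNReal.ofReal (2 * R)
      ≤ volume (Metric.ball x ε) / ENNReal.ofReal (2 * R) := by
        gcongr
        exact Measure.restrict_le_self
    _ = ENNReal.ofReal (ε / R) := by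
        rw [Real.volume_ball, ← ENNReal.ofReal_div_of_pos (by positivity)]
        congr 1
        field_simp

lemma ofReal_add_log_two_div_log_le {k L : ℝ} (hL : 1 < L) :
    ENNReal.ofReal ((k + log 2) / log L)
      ≤ (ENNReal.ofReal k / ENNReal.ofReal (log 2) + 1) / ENNReal.ofReal (logb 2 L) := by
  have hlog2 : 0 < log 2 := log_pos one_lt_two
  have hlogL : 0 < logb 2 L := logb_pos one_lt_two hL
  calc ENNReal.ofReal ((k + log 2) / log L) = ENNReal.ofReal ((k / log 2 + 1) / logb 2 L) := by
        rw [logb]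
        congr 1
        field_simp
    _ ≤ (ENNReal.ofReal k / ENNReal.ofReal (log 2) + 1) / ENNReal.ofReal (logb 2 L) := by
        rw [ENNReal.ofReal_div_of_pos hlogL, ← ENNReal.ofReal_div_of_pos hlog2, ← ENNReal.ofReal_one]
        gcongr
        exact ENNReal.ofReal_add_le

/-- Information-theoretic converse (Fano-type) bound, Theorem 2 of the paper: if `A` is
uniform on `[−R, R]` and `Â = g(Z)` is any estimator built from an observation `Z`, then
`ℙ(|Â − A| < ε) ≤ (I(A;Z) + 1) / log₂(R/ε)`, where the mutual information (in bits) is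
`I(A;Z) = D(ℙ_{(A,Z)} ‖ ℙ_A ⊗ ℙ_Z) / log 2`. -/
theorem fano_converse_deception_bound
    {Ω 𝒵 : Type*} [MeasurableSpace Ω] [MeasurableSpace 𝒵]
    (P : Measure Ω) [IsProbabilityMeasure P]
    (R ε : ℝ) (hR : 0 < R) (hε : 0 < ε) (hεR : ε < R)
    (A : Ω → ℝ) (Z : Ω → 𝒵) (g : 𝒵 → ℝ)
    (hA : Measurable A) (hZ : Measurable Z) (hg : Measurable g)
    -- `A` is uniformly distributed on `[−R, R]`
    (hunif : Measure.map A P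
      = (ENNReal.ofReal (2 * R))⁻¹ • (volume.restrict (Set.Icc (-R) R))) :
    P {ω | |g (Z ω) - A ω| < ε}
      ≤ (klDivergence (Measure.map (fun ω => (A ω, Z ω)) P)
            ((Measure.map A P).prod (Measure.map Z P)) / ENNReal.ofReal (Real.log 2) + 1)
          / ENNReal.ofReal (Real.logb 2 (R / ε)) := by
  have := Measure.isProbabilityMeasure_map (μ := P) (hA.prodMk hZ).aemeasurable
  have := Measure.isProbabilityMeasure_map (μ := P) hA.aemeasurable
  have := Measure.isProbabilityMeasure_map (μ := P) hZ.aemeasurable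
  set E : Set (ℝ × 𝒵) := {p | |g p.2 - p.1| < ε}
  have hE : MeasurableSet E :=
    measurableSet_lt ((hg.comp measurable_snd).sub measurable_fst).abs measurable_const
  have hνE : ((Measure.map A P).prod (Measure.map Z P)) E ≤ ENNReal.ofReal (ε / R) := by
    refine measure_prod_le_of_forall_slice_le hE fun z => ?_
    have hslice : (fun a => (a, z)) ⁻¹' E = Metric.ball (g z) ε := by
      ext a
      simp [E, Real.dist_eq, abs_sub_comm]
    rw [hslice, hunif]
    exact inv_smul_restrict_Icc_ball_le hR (g z) ε
  rw [show P {ω | |g (Z ω) - A ω| < ε} = P.map (fun ω => (A ω, Z ω)) E from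
    (Measure.map_apply (hA.prodMk hZ) hE).symm, klDivergence]
  split_ifs with h
  · obtain ⟨hμν, h_int⟩ := h
    have hfano := measureReal_mul_log_inv_le_integral_llr_add_log_two hμν h_int hE
      (c := ε / R) (ENNReal.toReal_le_of_le_ofReal (by positivity) hνE)
    rw [inv_div] at hfano
    have hRε : 1 < R / ε := (one_lt_div hε).mpr hεR
    refine le_trans ?_ (ofReal_add_log_two_div_log_le hRε)
    rw [← ofReal_measureReal]
    exact ENNReal.ofReal_le_ofReal ((le_div_iff₀ (log_pos hRε)).mpr hfano)
  · simp [ENNReal.top_div_of_ne_top]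
end

section
/- Let n ≥ 1, L ≥ 2, ζ > 0, let A be a real n×n matrix, and let (x_k), (u_k), (w_k) be sequences in ℝⁿ satisfying x_{k+1} = A·x_k + u_k + w_k for all 1 ≤ k ≤ L−1. Let G := ∑_{k=1}^{L−1} x_k x_kᵀ and suppose G − ζ·L·I is positive semidefinite (where I is the n×n identity). Then G is invertible, and the least-squares estimate Â := (∑_{k=1}^{L−1} (x_{k+1} − u_k)·x_kᵀ)·G⁻¹ satisfies ‖Â − A‖_op ≤ (1/(ζ·L))·∑_{k=1}^{L−1} ‖w_k x_kᵀ‖_op, where ‖·‖_op denotes the operator norm on real n×n matrices induced by the Euclidean norm on ℝⁿ. -/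
open Finset Matrix
open scoped Matrix.Norms.L2Operator

/-!
Substituting the dynamics into the regressor sum gives `∑ (x_{k+1} − u_k) x_kᵀ = A G + S` with
`S = ∑ w_k x_kᵀ`, so `Â − A = S G⁻¹`. The excitation bound `G ⪰ ζL·I` gives
`ζL‖z‖² ≤ ⟪z, G z⟫ ≤ ‖z‖ ‖G z‖`, i.e. `G` is bounded below by `ζL`, hence `‖G⁻¹‖ ≤ 1/(ζL)`,
and submultiplicativity with the triangle inequality for `‖S‖` finishes the proof.
-/

namespace Matrix

lemma PosSemidef.posDef_of_sub_smul_one {ι : Type*} [DecidableEq ι] {G : Matrix ι ι ℝ} {c : ℝ}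
    (hc : 0 < c) (h : (G - c • (1 : Matrix ι ι ℝ)).PosSemidef) : G.PosDef := by
  simpa using PosDef.posSemidef_add h (PosDef.one.smul hc)

lemma sum_vecMulVec_eq_mul_add {ι κ R : Type*} [Fintype ι] [CommRing R] {s : Finset κ}
    (A : Matrix ι ι R) {x y w : κ → ι → R} (h : ∀ k ∈ s, y k = A *ᵥ x k + w k) :
    ∑ k ∈ s, vecMulVec (y k) (x k)
      = A * ∑ k ∈ s, vecMulVec (x k) (x k) + ∑ k ∈ s, vecMulVec (w k) (x k) := by
  rw [Finset.mul_sum, ← Finset.sum_add_distrib]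
  refine Finset.sum_congr rfl fun k hk => ?_
  rw [h k hk, add_vecMulVec, mul_vecMulVec]

variable {ι : Type*} [Fintype ι] [DecidableEq ι]

lemma PosSemidef.mul_norm_sq_le_inner_toEuclideanCLM {G : Matrix ι ι ℝ} {c : ℝ}
    (h : (G - c • (1 : Matrix ι ι ℝ)).PosSemidef) (z : EuclideanSpace ℝ ι) :
    c * ‖z‖ ^ 2 ≤ inner ℝ z (toEuclideanCLM (𝕜 := ℝ) G z) := by
  have := h.dotProduct_mulVec_nonneg z.ofLp
  rw [← real_inner_self_eq_norm_sq, inner_toEuclideanCLM, EuclideanSpace.inner_eq_star_dotProduct]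
  simp only [star_trivial, sub_mulVec, smul_mulVec, one_mulVec, dotProduct_sub, dotProduct_smul,
    smul_eq_mul] at this ⊢
  linarith

lemma PosSemidef.mul_norm_le_norm_toEuclideanCLM {G : Matrix ι ι ℝ} {c : ℝ}
    (h : (G - c • (1 : Matrix ι ι ℝ)).PosSemidef) (z : EuclideanSpace ℝ ι) :
    c * ‖z‖ ≤ ‖toEuclideanCLM (𝕜 := ℝ) G z‖ := by
  rcases (norm_nonneg z).eq_or_lt with hz | hz
  · rw [← hz, mul_zero]
    exact norm_nonneg _
  refine le_of_mul_le_mul_right ?_ hz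
  calc c * ‖z‖ * ‖z‖ = c * ‖z‖ ^ 2 := by ring
    _ ≤ inner ℝ z (toEuclideanCLM (𝕜 := ℝ) G z) := h.mul_norm_sq_le_inner_toEuclideanCLM z
    _ ≤ ‖z‖ * ‖toEuclideanCLM (𝕜 := ℝ) G z‖ := real_inner_le_norm _ _
    _ = ‖toEuclideanCLM (𝕜 := ℝ) G z‖ * ‖z‖ := mul_comm _ _

lemma PosSemidef.l2_opNorm_inv_le {G : Matrix ι ι ℝ} {c : ℝ} (hc : 0 < c)
    (h : (G - c • (1 : Matrix ι ι ℝ)).PosSemidef) : ‖G⁻¹‖ ≤ c⁻¹ := by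
  have hG : IsUnit G.det := (isUnit_iff_isUnit_det G).mp (h.posDef_of_sub_smul_one hc).isUnit
  rw [← l2_opNorm_toEuclideanCLM]
  refine ContinuousLinearMap.opNorm_le_bound _ (inv_nonneg.mpr hc.le) fun y => ?_
  have hy : toEuclideanCLM (𝕜 := ℝ) G (toEuclideanCLM (𝕜 := ℝ) G⁻¹ y) = y := by
    ext i
    simp [mulVec_mulVec, mul_nonsing_inv G hG]
  rw [inv_mul_eq_div, le_div_iff₀' hc]
  simpa [hy] using h.mul_norm_le_norm_toEuclideanCLM (toEuclideanCLM (𝕜 := ℝ) G⁻¹ y)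

end Matrix

theorem ls_estimation_error_bound_vector_general
    (n L : ℕ) (hL : 2 ≤ L) (ζ : ℝ) (hζ : 0 < ζ)
    (A : Matrix (Fin n) (Fin n) ℝ) (x u w : ℕ → Fin n → ℝ)
    (hdyn : ∀ k, 1 ≤ k → k ≤ L - 1 → x (k + 1) = A *ᵥ x k + u k + w k)
    (hPE : (((∑ k ∈ Icc 1 (L - 1), vecMulVec (x k) (x k))
        - (ζ * L) • (1 : Matrix (Fin n) (Fin n) ℝ))).PosSemidef) :
    IsUnit (∑ k ∈ Icc 1 (L - 1), vecMulVec (x k) (x k))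
      ∧ ‖(∑ k ∈ Icc 1 (L - 1), vecMulVec (x (k + 1) - u k) (x k))
            * (∑ k ∈ Icc 1 (L - 1), vecMulVec (x k) (x k))⁻¹ - A‖
          ≤ (1 / (ζ * L)) * ∑ k ∈ Icc 1 (L - 1), ‖vecMulVec (w k) (x k)‖ := by
  set G := ∑ k ∈ Icc 1 (L - 1), vecMulVec (x k) (x k)
  set S := ∑ k ∈ Icc 1 (L - 1), vecMulVec (w k) (x k)
  have hζL : 0 < ζ * L := mul_pos hζ (Nat.cast_pos.mpr (by omega))
  have hG : IsUnit G := (hPE.posDef_of_sub_smul_one hζL).isUnit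
  have hregression : ∑ k ∈ Icc 1 (L - 1), vecMulVec (x (k + 1) - u k) (x k) = A * G + S :=
    sum_vecMulVec_eq_mul_add A fun k hk => by
      rw [hdyn k (mem_Icc.mp hk).1 (mem_Icc.mp hk).2]
      abel
  refine ⟨hG, ?_⟩
  rw [hregression, add_mul, mul_nonsing_inv_cancel_right _ _ ((isUnit_iff_isUnit_det G).mp hG),
    add_sub_cancel_left, one_div, mul_comm]
  calc ‖S * G⁻¹‖ ≤ ‖S‖ * ‖G⁻¹‖ := l2_opNorm_mul S G⁻¹
    _ ≤ (∑ k ∈ Icc 1 (L - 1), ‖vecMulVec (w k) (x k)‖) * (ζ * L)⁻¹ :=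
        mul_le_mul (norm_sum_le _ _) (hPE.l2_opNorm_inv_le hζL) (norm_nonneg _)
          (sum_nonneg fun _ _ => norm_nonneg _)

/-- Lemma 3 of the paper: under the realized persistent-excitation condition
`G = ∑_{k=1}^{L−1} x_k x_kᵀ ⪰ ζ·L·I`, the Gramian `G` is invertible and the least-squares
estimate `Â = (∑_k (x_{k+1} − u_k) x_kᵀ)·G⁻¹` of the open-loop gain matrix `A` of the
vector plant `x_{k+1} = A x_k + u_k + w_k` satisfies
`‖Â − A‖ ≤ (1/(ζL))·∑_k ‖w_k x_kᵀ‖` in the Euclidean-induced operator norm. -/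
theorem ls_estimation_error_bound_vector
    (n L : ℕ) (hn : 1 ≤ n) (hL : 2 ≤ L) (ζ : ℝ) (hζ : 0 < ζ)
    (A : Matrix (Fin n) (Fin n) ℝ) (x u w : ℕ → Fin n → ℝ)
    (hdyn : ∀ k, 1 ≤ k → k ≤ L - 1 → x (k + 1) = A *ᵥ x k + u k + w k)
    (hPE : (((∑ k ∈ Icc 1 (L - 1), vecMulVec (x k) (x k))
        - (ζ * L) • (1 : Matrix (Fin n) (Fin n) ℝ))).PosSemidef) :
    IsUnit (∑ k ∈ Icc 1 (L - 1), vecMulVec (x k) (x k))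
      ∧ ‖(∑ k ∈ Icc 1 (L - 1), vecMulVec (x (k + 1) - u k) (x k))
            * (∑ k ∈ Icc 1 (L - 1), vecMulVec (x k) (x k))⁻¹ - A‖
          ≤ (1 / (ζ * L)) * ∑ k ∈ Icc 1 (L - 1), ‖vecMulVec (w k) (x k)‖ :=
  ls_estimation_error_bound_vector_general n L hL ζ hζ A x u w hdyn hPE
end
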